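/- arXiv:2301.10647 — 2 statements merged into one kernel-verified Lean document; each statement's English description precedes it below -/
import Mathlib

section
/- Let N ≥ 1 and let A, A' ⊆ [0,N-1]. If A and A' are homometric, then the two-part ordered partitions (A, A^c) and (A', A'^c) of [0,N-1] are homometric; that is, A − A = A' − A', A^c − A^c = A'^c − A'^c, and A − A^c = A' − A'^c as multisets. -/
/-- The cyclic distance `d(i,j) = min(|i-j|, N-|i-j|)` on `ZMod N`. -/
def cdist {N : ℕ} (i j : ZMod N) : ℕ := min (i - j).val (j - i).val

/-- The cyclic difference multiset `A - B = {d(i,j) : i ∈ A, j ∈ B}`. -/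
def diffMS {N : ℕ} (A B : Finset (ZMod N)) : Multiset ℕ :=
  (A ×ˢ B).val.map fun p => cdist p.1 p.2

/-- The self difference multiset `A - A = {d(i,j) : i ≤ j ∈ A}`. -/
def selfDiffMS {N : ℕ} (A : Finset (ZMod N)) : Multiset ℕ :=
  ((A ×ˢ A).filter fun p => p.1.val ≤ p.2.val).val.map fun p => cdist p.1 p.2

/-- Two subsets are homometric if they have the same self difference multiset. -/
def Homometric {N : ℕ} (A B : Finset (ZMod N)) : Prop :=
  selfDiffMS A = selfDiffMS B

/-- `σ : ZMod N → ZMod N` is given by the action of an element of the dihedral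
group `D_{2N}`, generated by the rotation `i ↦ i + 1` and the reflection `i ↦ -i`. -/
def IsDihedral {N : ℕ} (σ : ZMod N → ZMod N) : Prop :=
  (∃ k : ZMod N, ∀ i, σ i = i + k) ∨ (∃ k : ZMod N, ∀ i, σ i = -i + k)

/-- Two subsets are equivalent if one is the image of the other under `D_{2N}`. -/
def EquivSets {N : ℕ} (A B : Finset (ZMod N)) : Prop :=
  ∃ σ : ZMod N → ZMod N, IsDihedral σ ∧ B = A.image σ

/-- An ordered partition of `[0, N-1]`: pairwise disjoint sets covering everything. -/
def IsPartitionOf {N K : ℕ} [NeZero N] (A : Fin K → Finset (ZMod N)) : Prop :=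
  (∀ i j, i ≠ j → Disjoint (A i) (A j)) ∧ Finset.univ.biUnion A = Finset.univ

/-- Two ordered partitions are homometric if `A i - A j = B i - B j` for all pairs. -/
def HomometricPart {N K : ℕ} (A B : Fin K → Finset (ZMod N)) : Prop :=
  ∀ i j, diffMS (A i) (A j) = diffMS (B i) (B j)

/-- Two ordered partitions are equivalent if a single dihedral element maps one to the other. -/
def EquivPart {N K : ℕ} (A B : Fin K → Finset (ZMod N)) : Prop :=
  ∃ σ : ZMod N → ZMod N, IsDihedral σ ∧ ∀ i, B i = (A i).image σ

/-- Two ordered partitions are pseudo-equivalent if each part is mapped by some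
(possibly different) dihedral element. -/
def PseudoEquivPart {N K : ℕ} (A B : Fin K → Finset (ZMod N)) : Prop :=
  ∀ i, ∃ σ : ZMod N → ZMod N, IsDihedral σ ∧ B i = (A i).image σ

/-- The periodic autocorrelation `a_x[ℓ] = ∑ x[n] x[n+ℓ]`. -/
noncomputable def autocorr {N : ℕ} [NeZero N] (x : ZMod N → ℝ) (ℓ : ZMod N) : ℝ :=
  ∑ n : ZMod N, x n * x (n + ℓ)

open Classical in
/-- The level set `{i : x[i] = a}` of a signal. -/
noncomputable def levelSet {N : ℕ} [NeZero N] (x : ZMod N → ℝ) (a : ℝ) : Finset (ZMod N) :=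
  Finset.univ.filter fun i => x i = a

/-! Counting ordered pairs instead of pairs with `i ≤ j` doubles every nonzero distance, so
`2 • selfDiffMS A = diffMS A A + #A • {0}`: homometry of `A` and `A'` amounts to `#A = #A'` and
`diffMS A A = diffMS A' A'`. By translation invariance `diffMS X (ZMod N)` depends only on `#X`, and
splitting `ZMod N = A ∪ Aᶜ` gives `diffMS A A + diffMS A Aᶜ = diffMS A (ZMod N)` and
`diffMS Aᶜ Aᶜ + diffMS A Aᶜ = diffMS Aᶜ (ZMod N)`. Cancelling yields first the cross term and
then the self differences of the complement. -/
open Finset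

section
variable {N : ℕ}

lemma cdist_comm (i j : ZMod N) : cdist i j = cdist j i := min_comm _ _

lemma cdist_self (i : ZMod N) : cdist i i = 0 := by simp [cdist]

lemma cdist_add_right (i j k : ZMod N) : cdist (i + k) (j + k) = cdist i j := by
  simp only [cdist, add_sub_add_right_eq_sub]

lemma diffMS_eq_sum (A B : Finset (ZMod N)) :
    diffMS A B = ∑ a ∈ A, ∑ b ∈ B, {cdist a b} := by
  rw [← Finset.sum_product', diffMS, ← Multiset.sum_map_singleton (Multiset.map _ _), Multiset.map_map]
  rfl

lemma diffMS_comm (A B : Finset (ZMod N)) : diffMS A B = diffMS B A := by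
  rw [diffMS_eq_sum, diffMS_eq_sum, Finset.sum_comm]
  simp only [cdist_comm]

lemma diffMS_union_right {A B C : Finset (ZMod N)} (h : Disjoint B C) :
    diffMS A (B ∪ C) = diffMS A B + diffMS A C := by
  simp only [diffMS_eq_sum, Finset.sum_union h, Finset.sum_add_distrib]

-- By translation invariance, every point sees the same multiset of distances to `ZMod N`.
lemma diffMS_univ_right [NeZero N] (A : Finset (ZMod N)) :
    diffMS A univ = #A • ∑ j : ZMod N, {cdist 0 j} := by
  rw [diffMS_eq_sum, ← Finset.sum_const]
  refine Finset.sum_congr rfl fun a _ => ?_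
  refine Fintype.sum_equiv (Equiv.addRight (-a)) _ _ fun j => ?_
  simpa using (cdist_add_right a j (-a)).symm

lemma selfDiffMS_add_selfDiffMS [NeZero N] (A : Finset (ZMod N)) :
    selfDiffMS A + selfDiffMS A = diffMS A A + Multiset.replicate #A 0 := by
  set f : ZMod N × ZMod N → ℕ := fun p => cdist p.1 p.2
  set L := (A ×ˢ A).filter fun p => p.1.val ≤ p.2.val
  set G := (A ×ˢ A).filter fun p => p.2.val ≤ p.1.val
  have hG : G.val.map f = L.val.map f := by
    have : G = L.map (Equiv.prodComm _ _).toEmbedding := by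
      ext ⟨i, j⟩; simp [G, L, and_comm]
    rw [this, Finset.map_val, Multiset.map_map]
    exact Multiset.map_congr rfl fun p _ => cdist_comm _ _
  have hLG : L ∪ G = A ×ˢ A := by
    rw [← Finset.filter_or]; exact Finset.filter_true_of_mem fun p _ => le_total _ _
  have hdiag : L ∩ G = A.diag := by
    ext ⟨i, j⟩
    simp only [L, G, Finset.mem_inter, Finset.mem_filter, Finset.mem_diag, Finset.mem_product]
    constructor
    · rintro ⟨⟨⟨hi, -⟩, hij⟩, -, hji⟩
      exact ⟨hi, ZMod.val_injective N (le_antisymm hij hji)⟩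
    · rintro ⟨hi, rfl⟩
      exact ⟨⟨⟨hi, hi⟩, le_rfl⟩, ⟨hi, hi⟩, le_rfl⟩
  have hrepl : A.diag.val.map f = Multiset.replicate #A 0 := by
    rw [Multiset.eq_replicate, Multiset.card_map, ← Finset.card_def, Finset.diag_card]
    simp [f, cdist_self]
  -- The pairs with `i ≤ j` and those with `j ≤ i` cover `A × A` and overlap on the diagonal.
  calc selfDiffMS A + selfDiffMS A = L.val.map f + G.val.map f := by rw [hG]; rfl
    _ = diffMS A A + Multiset.replicate #A 0 := by
      rw [← Multiset.map_add, ← Multiset.union_add_inter, ← Finset.union_val, ← Finset.inter_val,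
        hLG, hdiag, Multiset.map_add, hrepl]; rfl

lemma card_diffMS (A B : Finset (ZMod N)) : Multiset.card (diffMS A B) = #A * #B := by
  simp [diffMS]

lemma homometric_iff [NeZero N] {A B : Finset (ZMod N)} :
    Homometric A B ↔ #A = #B ∧ diffMS A A = diffMS B B := by
  have hA := selfDiffMS_add_selfDiffMS A
  have hB := selfDiffMS_add_selfDiffMS B
  constructor
  · intro h
    rw [Homometric] at h
    rw [h, hB] at hA
    have hcard : #A = #B := by
      have := congrArg Multiset.card hA
      simp only [Multiset.card_add, card_diffMS, Multiset.card_replicate] at this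
      exact le_antisymm (by nlinarith) (by nlinarith)
    rw [hcard] at hA
    exact ⟨hcard, (add_right_cancel hA).symm⟩
  · rintro ⟨hcard, hAB⟩
    rw [hAB, hcard, ← hB, ← two_nsmul, ← two_nsmul] at hA
    exact nsmul_right_injective two_ne_zero hA

lemma diffMS_self_add_diffMS_compl [NeZero N] (A : Finset (ZMod N)) :
    diffMS A A + diffMS A Aᶜ = #A • ∑ j : ZMod N, {cdist 0 j} := by
  rw [← diffMS_union_right disjoint_compl_right, Finset.union_compl, diffMS_univ_right]

lemma diffMS_compl_self_add_diffMS_compl [NeZero N] (A : Finset (ZMod N)) :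
    diffMS Aᶜ Aᶜ + diffMS A Aᶜ = #Aᶜ • ∑ j : ZMod N, {cdist 0 j} := by
  simpa [diffMS_comm Aᶜ A] using diffMS_self_add_diffMS_compl Aᶜ

end

/-- homometric sets yield homometric two-part partitions. -/
theorem homometric_two_part_partitions (N : ℕ) [NeZero N] (A A' : Finset (ZMod N))
    (h : Homometric A A') :
    selfDiffMS A = selfDiffMS A' ∧ selfDiffMS Aᶜ = selfDiffMS A'ᶜ ∧
      diffMS A Aᶜ = diffMS A' A'ᶜ := by
  obtain ⟨hcard, hself⟩ := homometric_iff.1 h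
  have hcross : diffMS A Aᶜ = diffMS A' A'ᶜ := add_left_cancel (a := diffMS A A) <| by
    rw [diffMS_self_add_diffMS_compl, hcard, hself, diffMS_self_add_diffMS_compl]
  have hcard_compl : #Aᶜ = #A'ᶜ := by rw [Finset.card_compl, Finset.card_compl, hcard]
  have hself_compl : diffMS Aᶜ Aᶜ = diffMS A'ᶜ A'ᶜ := add_right_cancel (b := diffMS A Aᶜ) <| by
    rw [diffMS_compl_self_add_diffMS_compl, hcard_compl, hcross, diffMS_compl_self_add_diffMS_compl]
  exact ⟨h, homometric_iff.2 ⟨hcard_compl, hself_compl⟩, hcross⟩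
end

section
/- Let N ≥ 1, K ≥ 1, and let α_1, …, α_K be any distinct real numbers. For signals x, x' ∈ {α_1, …, α_K}^N with level sets A_k(x) = {n : x[n] = α_k} and A_k(x') = {n : x'[n] = α_k}, if the ordered partitions (A_1(x), …, A_K(x)) and (A_1(x'), …, A_K(x')) of [0,N-1] are homometric, then a_x = a_{x'}. -/
lemma autocorr_neg {N : ℕ} [NeZero N] (x : ZMod N → ℝ) (ℓ : ZMod N) :
    autocorr x (-ℓ) = autocorr x ℓ := by
  unfold autocorr
  refine (Fintype.sum_equiv (Equiv.addRight ℓ) _ _ fun n => ?_).symm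
  simp [mul_comm]

lemma cdist_eq_iff {N : ℕ} [NeZero N] (ℓ i j : ZMod N) :
    cdist i j = cdist ℓ 0 ↔ j - i = ℓ ∨ j - i = -ℓ := by
  unfold cdist
  rw [sub_zero, zero_sub, ← neg_sub j i]
  constructor
  · intro h
    rcases min_choice (-(j - i)).val (j - i).val with h1 | h1 <;>
      rcases min_choice ℓ.val (-ℓ).val with h2 | h2 <;>
      rw [h1, h2] at h <;> have := ZMod.val_injective N h
    · right; rw [neg_eq_iff_eq_neg] at this; exact this
    · left; rwa [neg_inj] at this
    · left; exact this
    · right; exact this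
  · rintro (h | h) <;> rw [h]
    · exact min_comm _ _
    · rw [neg_neg]

noncomputable def cnt {N K : ℕ} [NeZero N] (α : Fin K → ℝ) (x : ZMod N → ℝ)
    (k k' : Fin K) (ℓ : ZMod N) : ℕ :=
  (((levelSet x (α k)) ×ˢ (levelSet x (α k'))).filter fun p => p.2 - p.1 = ℓ).card

lemma cnt_add_cnt_neg {N K : ℕ} [NeZero N] (α : Fin K → ℝ) (x : ZMod N → ℝ)
    (k k' : Fin K) (ℓ : ZMod N) :
    cnt α x k k' ℓ + cnt α x k k' (-ℓ) =
      (if ℓ = -ℓ then 2 else 1) *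
        Multiset.count (cdist ℓ 0) (diffMS (levelSet x (α k)) (levelSet x (α k'))) := by
  classical
  set A := levelSet x (α k)
  set B := levelSet x (α k')
  have hcount : Multiset.count (cdist ℓ 0) (diffMS A B)
      = ((A ×ˢ B).filter fun p => p.2 - p.1 = ℓ ∨ p.2 - p.1 = -ℓ).card := by
    rw [diffMS, Multiset.count_map]
    rw [show ((A ×ˢ B).filter fun p => p.2 - p.1 = ℓ ∨ p.2 - p.1 = -ℓ).card
        = Multiset.card (((A ×ˢ B).val).filter fun p => p.2 - p.1 = ℓ ∨ p.2 - p.1 = -ℓ) from rfl]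
    congr 1
    apply Multiset.filter_congr
    intro p _
    rw [eq_comm, cdist_eq_iff]
  rw [hcount]
  by_cases hl : ℓ = -ℓ
  · have heq : ((A ×ˢ B).filter fun p => p.2 - p.1 = ℓ ∨ p.2 - p.1 = -ℓ)
        = (A ×ˢ B).filter fun p => p.2 - p.1 = ℓ := by
      apply Finset.filter_congr
      intro p _
      constructor
      · rintro (h | h)
        · exact h
        · rw [h, ← hl]
      · intro h; exact Or.inl h
    rw [if_pos hl, heq, cnt, cnt, ← hl]
    ring
  · rw [if_neg hl, one_mul, cnt, cnt]
    rw [Finset.filter_or, ← Finset.card_union_add_card_inter, ← Finset.filter_and]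
    have he : ((A ×ˢ B).filter fun p => p.2 - p.1 = ℓ ∧ p.2 - p.1 = -ℓ) = ∅ := by
      apply Finset.filter_false_of_mem
      rintro p _ ⟨h1, h2⟩
      exact hl (h1 ▸ h2)
    rw [he, Finset.card_empty, add_zero]

lemma cnt_eq_card {N K : ℕ} [NeZero N] (α : Fin K → ℝ) (x : ZMod N → ℝ)
    (k k' : Fin K) (ℓ : ZMod N) :
    cnt α x k k' ℓ = (Finset.univ.filter fun n : ZMod N =>
      x n = α k ∧ x (n + ℓ) = α k').card := by
  classical
  rw [cnt]
  apply Finset.card_bij (fun p _ => p.1)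
  · rintro ⟨i, j⟩ hp
    simp only [Finset.mem_filter, Finset.mem_product, levelSet, Finset.mem_univ,
      true_and] at hp ⊢
    obtain ⟨⟨h1, h2⟩, h3⟩ := hp
    refine ⟨h1, ?_⟩
    rw [show i + ℓ = j by rw [← h3]; ring]
    exact h2
  · rintro ⟨i, j⟩ hp ⟨i', j'⟩ hp' hij
    simp only [Finset.mem_filter] at hp hp'
    simp only at hij
    subst hij
    have : j = j' := by
      have h4 : j = i + ℓ := by rw [← hp.2]; ring
      have h5 : j' = i + ℓ := by rw [← hp'.2]; ring
      rw [h4, h5]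
    simp [this]
  · intro n hn
    simp only [Finset.mem_filter, Finset.mem_univ, true_and] at hn
    refine ⟨(n, n + ℓ), ?_, rfl⟩
    simp only [Finset.mem_filter, Finset.mem_product, levelSet, Finset.mem_univ, true_and]
    exact ⟨⟨hn.1, hn.2⟩, by ring⟩

lemma autocorr_eq_sum {N K : ℕ} [NeZero N] (α : Fin K → ℝ) (hdist : Function.Injective α)
    (x : ZMod N → ℝ) (hx : ∀ n, ∃ k, x n = α k) (ℓ : ZMod N) :
    autocorr x ℓ = ∑ k : Fin K, ∑ k' : Fin K, α k * α k' * (cnt α x k k' ℓ : ℝ) := by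
  classical
  have key : ∀ n : ZMod N, x n * x (n + ℓ) =
      ∑ k : Fin K, ∑ k' : Fin K,
        if x n = α k ∧ x (n + ℓ) = α k' then α k * α k' else 0 := by
    intro n
    obtain ⟨k0, hk0⟩ := hx n
    obtain ⟨k1, hk1⟩ := hx (n + ℓ)
    have hcond : ∀ k k' : Fin K, (x n = α k ∧ x (n + ℓ) = α k') ↔ (k0 = k ∧ k1 = k') := by
      intro k k'
      rw [hk0, hk1, hdist.eq_iff, hdist.eq_iff]
    simp only [hcond]
    rw [Finset.sum_eq_single k0]
    · rw [Finset.sum_eq_single k1]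
      · simp [hk0, hk1]
      · intro b _ hb
        have hb1 : ¬ (k1 = b) := fun h => hb h.symm
        simp [hb1]
      · simp
    · intro b _ hb
      have hb' : ¬ (k0 = b) := fun h => hb h.symm
      simp [hb']
    · simp
  rw [autocorr]
  simp only [key]
  rw [Finset.sum_comm]
  refine Finset.sum_congr rfl fun k _ => ?_
  rw [Finset.sum_comm]
  refine Finset.sum_congr rfl fun k' _ => ?_
  rw [cnt_eq_card, ← Finset.sum_filter, Finset.sum_const, nsmul_eq_mul, mul_comm]

/-- homometric level-set partitions imply equal autocorrelations,
for any distinct alphabet values. -/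
theorem homometric_implies_autocorr_finite_alphabet (N K : ℕ) [NeZero N] (hK : 1 ≤ K)
    (α : Fin K → ℝ) (hdist : Function.Injective α)
    (x x' : ZMod N → ℝ)
    (hx : ∀ n, ∃ k, x n = α k) (hx' : ∀ n, ∃ k, x' n = α k)
    (h : HomometricPart (fun k => levelSet x (α k)) (fun k => levelSet x' (α k))) :
    autocorr x = autocorr x' := by
  classical
  funext ℓ
  have key : ∀ y : ZMod N → ℝ, (∀ n, ∃ k, y n = α k) →
      autocorr y ℓ + autocorr y (-ℓ) = ∑ k : Fin K, ∑ k' : Fin K, α k * α k' *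
        (((if ℓ = -ℓ then 2 else 1) *
          Multiset.count (cdist ℓ 0) (diffMS (levelSet y (α k)) (levelSet y (α k'))) : ℕ) : ℝ) := by
    intro y hy
    rw [autocorr_eq_sum α hdist y hy ℓ, autocorr_eq_sum α hdist y hy (-ℓ),
      ← Finset.sum_add_distrib]
    refine Finset.sum_congr rfl fun k _ => ?_
    rw [← Finset.sum_add_distrib]
    refine Finset.sum_congr rfl fun k' _ => ?_
    rw [← mul_add, ← Nat.cast_add, cnt_add_cnt_neg]
  have h' : ∀ i j : Fin K, diffMS (levelSet x (α i)) (levelSet x (α j))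
      = diffMS (levelSet x' (α i)) (levelSet x' (α j)) := h
  have e1 := key x hx
  have e2 := key x' hx'
  rw [autocorr_neg] at e1 e2
  simp only [h'] at e1
  rw [← e2] at e1
  linarith
end
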